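/- arXiv:1902.10660 — 3 statements merged into one kernel-verified Lean document; each statement's English description precedes it below -/
import Mathlib

section
/- Let n0 and n1 be real numbers with 0 ≤ n1, 0 < n0 < N0, n1/N1 < n0/N0 and (n1+1)/N1 ≤ n0/N0. Then F(n0, n1+1) < F(n0, n1). (In the decision-tree setting, this says that moving one label-1 example from the right child to the left child strictly decreases the information-gain splitting score.) -/
/-
With `φ x = x log x`, the score is `F(s, t) = φ s + φ t + φ (N0 - s) + φ (N1 - t) - φ (s + t)
- φ (N0 + N1 - s - t) - φ N0 - φ N1`. For fixed `s`, its derivative in `t` is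
`log (t (N0 + N1 - s - t) / ((N1 - t) (s + t)))`, and the argument of this logarithm is below `1`
exactly when `t N0 < s N1`. So `t ↦ F(s, t)` strictly decreases on `[0, s N1 / N0]`, an interval
that contains `n1` and `n1 + 1`.
-/

/-- The information-gain score function `F(s,t)` (up to positive affine transform),
with `0 · log 0 = 0` holding definitionally since `Real.log 0 = 0`. -/
noncomputable def F (N0 N1 s t : ℝ) : ℝ :=
  s * Real.log (s / (N0 * (s + t))) + t * Real.log (t / (N1 * (s + t))) +
    (N0 - s) * Real.log ((N0 - s) / (N0 * (N0 + N1 - s - t))) +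
    (N1 - t) * Real.log ((N1 - t) / (N1 * (N0 + N1 - s - t)))

open Real Set

lemma mul_log_div_mul {x a b : ℝ} (hx : 0 ≤ x) (ha : 0 < a) (hb : 0 < b) :
    x * log (x / (a * b)) = x * log x - x * log a - x * log b := by
  rcases hx.eq_or_lt with rfl | hx
  · simp
  · rw [log_div hx.ne' (mul_pos ha hb).ne', log_mul ha.ne' hb.ne']
    ring

lemma F_eq_mul_log {N0 N1 s t : ℝ} (hN0 : 0 < N0) (hN1 : 0 < N1) (hs : 0 ≤ s) (hsN : s ≤ N0)
    (ht : 0 ≤ t) (htN : t ≤ N1) (hst : 0 < s + t) (hstN : s + t < N0 + N1) :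
    F N0 N1 s t = s * log s + t * log t + (N0 - s) * log (N0 - s) + (N1 - t) * log (N1 - t)
      - (s + t) * log (s + t) - (N0 + N1 - s - t) * log (N0 + N1 - s - t)
      - N0 * log N0 - N1 * log N1 := by
  have hrest : 0 < N0 + N1 - s - t := by linarith
  rw [F, mul_log_div_mul hs hN0 hst, mul_log_div_mul ht hN1 hst,
    mul_log_div_mul (sub_nonneg.2 hsN) hN0 hrest, mul_log_div_mul (sub_nonneg.2 htN) hN1 hrest]
  ring

lemma hasDerivAt_mul_log_add_mul_log_sub {a b c t : ℝ} (ht : t ≠ 0) (hat : a - t ≠ 0)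
    (hbt : b + t ≠ 0) (hct : c - t ≠ 0) :
    HasDerivAt (fun t ↦ t * log t + (a - t) * log (a - t) - (b + t) * log (b + t)
        - (c - t) * log (c - t))
      (log t - log (a - t) - log (b + t) + log (c - t)) t := by
  have hsub (d : ℝ) (hdt : d - t ≠ 0) :
      HasDerivAt (fun t ↦ (d - t) * log (d - t)) ((log (d - t) + 1) * -1) t :=
    (hasDerivAt_mul_log hdt).comp t ((hasDerivAt_id t).const_sub d)
  have hadd : HasDerivAt (fun t ↦ (b + t) * log (b + t)) ((log (b + t) + 1) * 1) t :=
    (hasDerivAt_mul_log hbt).comp t ((hasDerivAt_id t).const_add b)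
  exact ((((hasDerivAt_mul_log ht).add (hsub a hat)).sub hadd).sub (hsub c hct)).congr_deriv
    (by ring)

theorem strictAntiOn_F {N0 N1 s : ℝ} (hN0 : 0 < N0) (hN1 : 0 < N1) (hs : 0 < s) (hsN : s < N0) :
    StrictAntiOn (F N0 N1 s) (Icc 0 (s * N1 / N0)) := by
  have hbound : s * N1 / N0 < N1 := by
    rw [div_lt_iff₀ hN0]
    nlinarith
  set c := N0 + N1 - s
  let g t := t * log t + (N1 - t) * log (N1 - t) - (s + t) * log (s + t) - (c - t) * log (c - t)
  have hF : EqOn (fun t ↦ g t + (s * log s + (N0 - s) * log (N0 - s) - N0 * log N0 - N1 * log N1))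
      (F N0 N1 s) (Icc 0 (s * N1 / N0)) := by
    rintro t ⟨ht, htN⟩
    rw [F_eq_mul_log hN0 hN1 hs.le hsN.le ht (by linarith) (by linarith) (by linarith)]
    ring
  refine StrictAntiOn.congr ?_ hF
  refine strictAntiOn_of_deriv_neg (convex_Icc _ _) (by fun_prop) fun t ht ↦ ?_
  rw [interior_Icc] at ht
  obtain ⟨ht, htN⟩ := ht
  have hat : 0 < N1 - t := by linarith
  have hct : 0 < c - t := by linarith
  rw [deriv_add_const, (hasDerivAt_mul_log_add_mul_log_sub ht.ne' hat.ne' (by linarith)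
    hct.ne').deriv]
  -- `(N1 - t) (s + t) - t (c - t) = s N1 - t N0`, positive since `t < s N1 / N0`.
  have hlog : log (t * (c - t)) < log ((N1 - t) * (s + t)) := by
    rw [lt_div_iff₀ hN0] at htN
    exact log_lt_log (by positivity) (by nlinarith)
  rw [log_mul ht.ne' hct.ne', log_mul hat.ne' (by linarith)] at hlog
  linarith

theorem stmt1_general (N0 N1 n0 n1 : ℝ) (hN0 : 0 < N0) (hN1 : 0 < N1)
    (hn1 : 0 ≤ n1) (hn0 : 0 < n0) (hn0' : n0 < N0)
    (hle : (n1 + 1) / N1 ≤ n0 / N0) :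
    F N0 N1 n0 (n1 + 1) < F N0 N1 n0 n1 := by
  have hmax : n1 + 1 ≤ n0 * N1 / N0 := by
    rw [div_le_div_iff₀ hN1 hN0] at hle
    rw [le_div_iff₀ hN0]
    linarith
  exact strictAntiOn_F hN0 hN1 hn0 hn0' ⟨hn1, by linarith⟩ ⟨by linarith, hmax⟩ (by linarith)

theorem stmt1 (N0 N1 n0 n1 : ℝ) (hN0 : 0 < N0) (hN1 : 0 < N1)
    (hn1 : 0 ≤ n1) (hn0 : 0 < n0) (hn0' : n0 < N0)
    (hlt : n1 / N1 < n0 / N0) (hle : (n1 + 1) / N1 ≤ n0 / N0) :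
    F N0 N1 n0 (n1 + 1) < F N0 N1 n0 n1 :=
  stmt1_general N0 N1 n0 n1 hN0 hN1 hn1 hn0 hn0' hle
end

section
/- Let n0 and n1 be real numbers with 0 ≤ n1, 0 < n0 < N0, n1/N1 < n0/N0 and (n1+1)/N1 ≤ n0/N0. Then G(n0, n1+1) < G(n0, n1). (In the decision-tree setting, this says that moving one label-1 example from the right child to the left child strictly decreases the Gini-impurity splitting score.) -/
/-!
Writing `s ∥ t = s t / (s + t)`, one has `(s² + t²)/(s + t) = s + t - 2 (s ∥ t)`, so
`G(s, t) = N0 + N1 - 2 (s ∥ t + (N0 - s) ∥ (N1 - t))`. Moving one label-1 example to the left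
child raises `s ∥ t` by `s/(s+t) · s/(s+t+1)` and lowers `(N0 - s) ∥ (N1 - t)` by the analogous
product of label-0 fractions of the right child. The hypothesis `(n1 + 1)/N1 ≤ n0/N0` says that
after the move the label-0 fraction of the left child is still at least that of the right child,
and before the move it is then strictly larger, so the gain wins.
-/

/-- The Gini-impurity score function `G(s,t)` (up to positive affine transform). -/
noncomputable def G (N0 N1 s t : ℝ) : ℝ :=
  (s ^ 2 + t ^ 2) / (s + t) + ((N0 - s) ^ 2 + (N1 - t) ^ 2) / (N0 + N1 - s - t)

noncomputable def parallelSum (x y : ℝ) : ℝ := x * y / (x + y)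

lemma sq_add_sq_div_add {x y : ℝ} (h : x + y ≠ 0) :
    (x ^ 2 + y ^ 2) / (x + y) = x + y - 2 * parallelSum x y := by
  unfold parallelSum
  field_simp
  ring

lemma parallelSum_add_one_sub {x y : ℝ} (h : x + y ≠ 0) (h' : x + y + 1 ≠ 0) :
    parallelSum x (y + 1) - parallelSum x y = x / (x + y + 1) * (x / (x + y)) := by
  unfold parallelSum
  rw [← add_assoc]
  field_simp
  ring

lemma G_eq_sub_parallelSum {N0 N1 s t : ℝ} (hl : s + t ≠ 0) (hr : N0 + N1 - s - t ≠ 0) :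
    G N0 N1 s t = N0 + N1 - 2 * (parallelSum s t + parallelSum (N0 - s) (N1 - t)) := by
  have hr' : N0 - s + (N1 - t) ≠ 0 := by
    convert hr using 1; ring
  rw [G, sq_add_sq_div_add hl, show N0 + N1 - s - t = N0 - s + (N1 - t) by ring,
    sq_add_sq_div_add hr']
  ring

lemma G_sub_G_add_one {N0 N1 s t : ℝ} (hl : s + t ≠ 0) (hl' : s + t + 1 ≠ 0)
    (hr : N0 + N1 - s - t ≠ 0) (hr' : N0 + N1 - s - t - 1 ≠ 0) :
    G N0 N1 s t - G N0 N1 s (t + 1) =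
      2 * (s / (s + t + 1) * (s / (s + t))
        - (N0 - s) / (N0 + N1 - s - t) * ((N0 - s) / (N0 + N1 - s - t - 1))) := by
  have hr'' : N0 + N1 - s - (t + 1) ≠ 0 := by rwa [← sub_sub]
  have hstep : parallelSum (N0 - s) (N1 - t) - parallelSum (N0 - s) (N1 - (t + 1)) =
      (N0 - s) / (N0 + N1 - s - t) * ((N0 - s) / (N0 + N1 - s - t - 1)) := by
    have e : N0 - s + (N1 - (t + 1)) = N0 + N1 - s - t - 1 := by ring
    rw [show N1 - t = N1 - (t + 1) + 1 by ring, parallelSum_add_one_sub (by rwa [e]) (by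
      rw [e]; simpa using hr), e, sub_add_cancel]
  rw [G_eq_sub_parallelSum hl hr, G_eq_sub_parallelSum (by rwa [← add_assoc]) hr'',
    ← hstep, ← parallelSum_add_one_sub hl hl']
  ring

theorem stmt8_general (N0 N1 n0 n1 : ℝ) (hN0 : 0 < N0) (hN1 : 0 < N1)
    (hn1 : 0 ≤ n1) (hn0 : 0 < n0) (hn0' : n0 < N0)
    (hle : (n1 + 1) / N1 ≤ n0 / N0) :
    G N0 N1 n0 (n1 + 1) < G N0 N1 n0 n1 := by
  rw [div_le_div_iff₀ hN1 hN0] at hle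
  have hl : 0 < n0 + n1 := by linarith
  have hr' : 0 < N0 + N1 - n0 - n1 - 1 := by nlinarith
  have hbefore : (N0 - n0) / (N0 + N1 - n0 - n1) < n0 / (n0 + n1) := by
    rw [div_lt_div_iff₀ (by linarith) hl]
    nlinarith
  have hafter : (N0 - n0) / (N0 + N1 - n0 - n1 - 1) ≤ n0 / (n0 + n1 + 1) := by
    rw [div_le_div_iff₀ hr' (by linarith)]
    nlinarith
  have hgain : (N0 - n0) / (N0 + N1 - n0 - n1) * ((N0 - n0) / (N0 + N1 - n0 - n1 - 1)) <
      n0 / (n0 + n1 + 1) * (n0 / (n0 + n1)) := by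
    rw [mul_comm]
    exact mul_lt_mul' hafter hbefore (div_nonneg (by linarith) (by linarith))
      (div_pos hn0 (by linarith))
  have hdiff := G_sub_G_add_one (N0 := N0) (N1 := N1) hl.ne' (by linarith) (by linarith)
    hr'.ne'
  linarith

theorem stmt8 (N0 N1 n0 n1 : ℝ) (hN0 : 0 < N0) (hN1 : 0 < N1)
    (hn1 : 0 ≤ n1) (hn0 : 0 < n0) (hn0' : n0 < N0)
    (hlt : n1 / N1 < n0 / N0) (hle : (n1 + 1) / N1 ≤ n0 / N0) :
    G N0 N1 n0 (n1 + 1) < G N0 N1 n0 n1 :=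
  stmt8_general N0 N1 n0 n1 hN0 hN1 hn1 hn0 hn0' hle
end

section
/- Fix a real number n1 with 0 < n1 < N1 and let s satisfy 0 < s < N0. Then the derivative of the function u ↦ G(u, n1) at u = s is negative if and only if s/N0 < n1/N1, is zero if and only if s/N0 = n1/N1, and is positive if and only if s/N0 > n1/N1. -/
theorem hasDerivAt_sq_add_sq_div_add (c x : ℝ) (hx : x + c ≠ 0) :
    HasDerivAt (fun x => (x ^ 2 + c ^ 2) / (x + c)) (1 - 2 * c ^ 2 / (x + c) ^ 2) x := by
  have hnum : HasDerivAt (fun x : ℝ => x ^ 2 + c ^ 2) (2 * x) x := by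
    simpa using (hasDerivAt_pow 2 x).add_const (c ^ 2)
  have hden : HasDerivAt (fun x : ℝ => x + c) 1 x := (hasDerivAt_id x).add_const c
  refine (hnum.div hden hx).congr_deriv ?_
  field_simp
  ring

theorem G_eq_add (N0 N1 u t : ℝ) :
    G N0 N1 u t = (u ^ 2 + t ^ 2) / (u + t) +
      ((N0 - u) ^ 2 + (N1 - t) ^ 2) / ((N0 - u) + (N1 - t)) := by
  rw [G, show N0 + N1 - u - t = (N0 - u) + (N1 - t) by ring]

theorem hasDerivAt_G_fst {N0 N1 s t : ℝ} (hst : s + t ≠ 0) (hD : N0 + N1 - s - t ≠ 0) :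
    HasDerivAt (fun u => G N0 N1 u t)
      (2 * (N1 - t) ^ 2 / (N0 + N1 - s - t) ^ 2 - 2 * t ^ 2 / (s + t) ^ 2) s := by
  have hsplit : N0 + N1 - s - t = (N0 - s) + (N1 - t) := by ring
  rw [hsplit] at hD ⊢
  have hfirst := hasDerivAt_sq_add_sq_div_add t s hst
  have hsecond := (hasDerivAt_sq_add_sq_div_add (N1 - t) (N0 - s) hD).comp_const_sub N0 s
  simp only [G_eq_add]
  refine (hfirst.add hsecond).congr_deriv ?_
  ring

theorem exists_pos_deriv_G_fst_eq_mul {N0 N1 s t : ℝ} (hs : 0 < s) (hs' : s < N0)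
    (ht : 0 < t) (ht' : t < N1) :
    ∃ K > 0, deriv (fun u => G N0 N1 u t) s = (s * N1 - t * N0) * K := by
  have hst : 0 < s + t := by linarith
  have hD : 0 < N0 + N1 - s - t := by linarith
  refine ⟨2 * ((N1 - t) * (s + t) + t * (N0 + N1 - s - t)) / ((s + t) * (N0 + N1 - s - t)) ^ 2,
    ?_, ?_⟩
  · have : 0 < N1 - t := by linarith
    positivity
  · rw [(hasDerivAt_G_fst hst.ne' hD.ne').deriv]
    field_simp
    ring

theorem stmt10 (N0 N1 n1 s : ℝ) (hN0 : 0 < N0) (hN1 : 0 < N1)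
    (hn1 : 0 < n1) (hn1' : n1 < N1) (hs : 0 < s) (hs' : s < N0) :
    (deriv (fun u => G N0 N1 u n1) s < 0 ↔ s / N0 < n1 / N1) ∧
    (deriv (fun u => G N0 N1 u n1) s = 0 ↔ s / N0 = n1 / N1) ∧
    (0 < deriv (fun u => G N0 N1 u n1) s ↔ n1 / N1 < s / N0) := by
  obtain ⟨K, hK, hderiv⟩ := exists_pos_deriv_G_fst_eq_mul hs hs' hn1 hn1'
  rw [hderiv, div_lt_div_iff₀ hN0 hN1, div_eq_div_iff hN0.ne' hN1.ne', div_lt_div_iff₀ hN1 hN0]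
  exact ⟨by simp [mul_neg_iff, hK, hK.not_gt], (mul_eq_zero_iff_right hK.ne').trans sub_eq_zero,
    (mul_pos_iff_of_pos_right hK).trans sub_pos⟩
end
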